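/- arXiv:math/0407098 — 5 statements merged into one kernel-verified Lean document; each statement's English description precedes it below -/
import Mathlib

section
/- Let x ≤ y ≤ z be positive integers with gcd(x,y,z) = 1 such that x divides y+z, y divides z+x, and z divides x+y. Then (x,y,z) is one of (1,1,1), (1,1,2), or (1,2,3). -/
/-- The only triples `x ≤ y ≤ z` of positive integers with `gcd(x,y,z)=1` and
`x ∣ y+z`, `y ∣ z+x`, `z ∣ x+y` are `(1,1,1)`, `(1,1,2)`, `(1,2,3)`. -/
theorem urn_elliptic_triples (x y z : ℕ) (hx : 0 < x) (hxy : x ≤ y) (hyz : y ≤ z)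
    (hgcd : Nat.gcd x (Nat.gcd y z) = 1)
    (h1 : x ∣ y + z) (h2 : y ∣ z + x) (h3 : z ∣ x + y) :
    (x, y, z) = (1, 1, 1) ∨ (x, y, z) = (1, 1, 2) ∨ (x, y, z) = (1, 2, 3) := by
  have hy : 0 < y := lt_of_lt_of_le hx hxy
  have hz : 0 < z := lt_of_lt_of_le hy hyz
  have hxdvd : x ∣ y → x ∣ z → x = 1 := by
    intro hxy' hxz
    have : x ∣ Nat.gcd x (Nat.gcd y z) := Nat.dvd_gcd dvd_rfl (Nat.dvd_gcd hxy' hxz)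
    rw [hgcd] at this
    exact Nat.dvd_one.mp this
  obtain ⟨k, hk⟩ := h3
  have hk1 : 1 ≤ k := by
    rcases Nat.eq_zero_or_pos k with h | h
    · simp [h] at hk; omega
    · exact h
  have hk2 : k ≤ 2 := by nlinarith
  interval_cases k
  · -- x + y = z
    have hz' : z = x + y := by omega
    subst hz'
    have hy2 : y ∣ 2 * x := by
      have h2' : y ∣ 2 * x + y := by
        have h : x + y + x = 2 * x + y := by ring
        rwa [h] at h2
      exact (Nat.dvd_add_right (dvd_refl y)).mp (by rwa [Nat.add_comm] at h2')
    obtain ⟨m, hm⟩ := hy2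
    have hm1 : 1 ≤ m := by
      rcases Nat.eq_zero_or_pos m with h | h
      · simp [h] at hm; omega
      · exact h
    have hm2 : m ≤ 2 := by nlinarith
    interval_cases m
    · -- y = 2x
      have hyx : y = 2 * x := by omega
      have hx' : x = 1 := hxdvd ⟨2, by omega⟩ ⟨3, by omega⟩
      right; right
      simp [Prod.ext_iff]
      omega
    · -- y = x
      have hyx : y = x := by omega
      have hx' : x = 1 := hxdvd ⟨1, by omega⟩ ⟨2, by omega⟩
      right; left
      simp [Prod.ext_iff]
      omega
  · -- x + y = 2z → x = y = z
    have hxz : x = z := by omega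
    have hyz' : y = z := by omega
    have hx' : x = 1 := hxdvd ⟨1, by omega⟩ ⟨1, by omega⟩
    left
    simp [Prod.ext_iff]
    omega
end

section
/- If positive integers x ≤ y ≤ z satisfy gcd(x,y,z) = 1 and the divisibility conditions x ∣ y+z, y ∣ z+x, z ∣ x+y, then z ≤ 3 (i.e., the largest entry of any such triple is at most 3). -/
/-- For positive integers `x ≤ y ≤ z` with `gcd(x,y,z)=1` and the divisibility
conditions `x ∣ y+z`, `y ∣ z+x`, `z ∣ x+y`, the largest entry is at most 3. -/
theorem urn_triple_le_three (x y z : ℕ) (hx : 0 < x) (hxy : x ≤ y) (hyz : y ≤ z)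
    (hgcd : Nat.gcd x (Nat.gcd y z) = 1)
    (h1 : x ∣ y + z) (h2 : y ∣ z + x) (h3 : z ∣ x + y) :
    z ≤ 3 := by
  have hz : 0 < z := lt_of_lt_of_le hx (hxy.trans hyz)
  have hy : 0 < y := lt_of_lt_of_le hx hxy
  obtain ⟨k, hk⟩ := h3
  have hk1 : 1 ≤ k := by nlinarith
  have hk2 : k ≤ 2 := by nlinarith
  interval_cases k
  · -- x + y = z
    have hy2x : y ∣ 2 * x := by
      have h2' : y ∣ 2 * x + y := by
        have : z + x = 2 * x + y := by omega
        rwa [this] at h2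
      have := Nat.dvd_sub h2' (dvd_refl y)
      simpa using this
    obtain ⟨m, hm⟩ := hy2x
    have hm1 : 1 ≤ m := by nlinarith
    have hm2 : m ≤ 2 := by nlinarith
    interval_cases m
    · -- y = 2x, z = 3x
      have hxd : x ∣ Nat.gcd x (Nat.gcd y z) :=
        Nat.dvd_gcd dvd_rfl (Nat.dvd_gcd ⟨2, by omega⟩ ⟨3, by omega⟩)
      rw [hgcd] at hxd
      have := Nat.dvd_one.mp hxd
      omega
    · -- y = x, z = 2x
      have hxd : x ∣ Nat.gcd x (Nat.gcd y z) :=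
        Nat.dvd_gcd dvd_rfl (Nat.dvd_gcd ⟨1, by omega⟩ ⟨2, by omega⟩)
      rw [hgcd] at hxd
      have := Nat.dvd_one.mp hxd
      omega
  · -- x + y = 2z forces x = y = z
    have hxz : x = z := by omega
    have hxd : x ∣ Nat.gcd x (Nat.gcd y z) :=
      Nat.dvd_gcd dvd_rfl (Nat.dvd_gcd ⟨1, by omega⟩ ⟨1, by omega⟩)
    rw [hgcd] at hxd
    have := Nat.dvd_one.mp hxd
    omega
end

section
/- Let ψ be the formal power series in z determined by the implicit equation ψ(I(u)) = u^{a₀}/(1 − u^h)^{t₀/h}, where I(u) = Σ_{j≥0} c_j u^{a+jh} with c₀ ≠ 0 is a formal power series whose nonzero exponents all lie in a + hℤ≥0. Assume a divides a₀ and a divides h. Then ψ(z) = z^{a₀/a} · φ(z^{h/a}) for some formal power series φ with nonzero constant term; in particular ψ is a well-defined formal power series. -/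
open scoped Classical
open PowerSeries

/-- Composition `f ∘ g` of formal power series (substitute `g` into `f`);
this is the genuine composition whenever `g` has zero constant coefficient. -/
noncomputable def psComp (f g : PowerSeries ℝ) : PowerSeries ℝ :=
  PowerSeries.mk fun n =>
    ∑ k ∈ Finset.range (n + 1), PowerSeries.coeff k f * PowerSeries.coeff n (g ^ k)

/-- Recursive solution of a lower-triangular system. -/
noncomputable def phiDef (g : ℕ → ℝ) (M : ℕ → ℕ → ℝ) : ℕ → ℝ
  | m => (g m - ∑ t ∈ (Finset.range m).attach, phiDef g M t.1 * M t.1 m) / M m m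
  decreasing_by exact Finset.mem_range.mp t.2

lemma phiDef_eq (g : ℕ → ℝ) (M : ℕ → ℕ → ℝ) (m : ℕ) :
    phiDef g M m = (g m - ∑ t ∈ Finset.range m, phiDef g M t * M t m) / M m m := by
  rw [phiDef]
  congr 1
  rw [Finset.sum_attach (Finset.range m) (fun t => phiDef g M t * M t m)]

lemma pow_aux (a h : ℕ) (hh : 0 < h) (I : PowerSeries ℝ)
    (hsupp : ∀ n, PowerSeries.coeff n I ≠ 0 → ∃ j, n = a + h * j) (k : ℕ) :
    (∀ n, PowerSeries.coeff n (I ^ k) ≠ 0 → ∃ j, n = k * a + h * j) ∧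
      PowerSeries.coeff (k * a) (I ^ k) = (PowerSeries.coeff a I) ^ k := by
  induction k with
  | zero =>
    constructor
    · intro n hn
      have hn0 : n = 0 := by
        by_contra hne
        simp [pow_zero, PowerSeries.coeff_one, hne] at hn
      exact ⟨0, by omega⟩
    · simp
  | succ k ih =>
    have hmul : ∀ n, PowerSeries.coeff n (I ^ (k + 1)) =
        ∑ p ∈ Finset.HasAntidiagonal.antidiagonal n, PowerSeries.coeff p.1 (I ^ k) * PowerSeries.coeff p.2 I := by
      intro n; rw [pow_succ, PowerSeries.coeff_mul]
    constructor
    · intro n hn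
      rw [hmul] at hn
      obtain ⟨p, hp, hpne⟩ := Finset.exists_ne_zero_of_sum_ne_zero hn
      have h1 : PowerSeries.coeff p.1 (I ^ k) ≠ 0 := fun h => hpne (by simp [h])
      have h2 : PowerSeries.coeff p.2 I ≠ 0 := fun h => hpne (by simp [h])
      obtain ⟨j₁, hj₁⟩ := ih.1 p.1 h1
      obtain ⟨j₂, hj₂⟩ := hsupp p.2 h2
      have hps : p.1 + p.2 = n := Finset.HasAntidiagonal.mem_antidiagonal.mp hp
      exact ⟨j₁ + j₂, by rw [← hps, hj₁, hj₂]; ring⟩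
    · rw [hmul]
      rw [Finset.sum_eq_single (k * a, a)]
      · rw [ih.2, pow_succ]
      · intro p hp hne
        by_contra hcon
        have h1 : PowerSeries.coeff p.1 (I ^ k) ≠ 0 := fun h => hcon (by simp [h])
        have h2 : PowerSeries.coeff p.2 I ≠ 0 := fun h => hcon (by simp [h])
        obtain ⟨j₁, hj₁⟩ := ih.1 p.1 h1
        obtain ⟨j₂, hj₂⟩ := hsupp p.2 h2
        have hps : p.1 + p.2 = (k + 1) * a := Finset.HasAntidiagonal.mem_antidiagonal.mp hp
        have : j₁ = 0 ∧ j₂ = 0 := by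
          rw [hj₁, hj₂] at hps
          constructor <;> nlinarith
        apply hne
        rw [Prod.ext_iff, hj₁, hj₂, this.1, this.2]
        constructor <;> simp
      · intro hns
        exfalso; apply hns
        rw [Finset.HasAntidiagonal.mem_antidiagonal]; ring

/-- If `ψ(I(u)) = u^{a₀}(1 - u^h)^{-t₀/h}` where `I(u) = Σ_j c_j u^{a+jh}` with
`c₀ ≠ 0`, and `a ∣ a₀`, `a ∣ h`, then `ψ(z) = z^{a₀/a} φ(z^{h/a})` for some formal
power series `φ` with nonzero constant term; in particular `ψ` is well defined. -/

theorem urn_psi_formal_structure (a₀ t₀ a h : ℕ)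
    (ha : 0 < a) (ha₀ : 0 < a₀) (ht₀ : 0 < t₀) (hh : 0 < h)
    (hdvd₁ : a ∣ a₀) (hdvd₂ : a ∣ h)
    (c : ℕ → ℝ) (hc₀ : c 0 ≠ 0)
    (I : PowerSeries ℝ)
    (hI : ∀ n : ℕ, PowerSeries.coeff n I =
      if ∃ j : ℕ, n = a + h * j then c ((n - a) / h) else 0)
    (R : PowerSeries ℝ)
    (hR : ∀ n : ℕ, PowerSeries.coeff n R =
      if ∃ j : ℕ, n = a₀ + h * j then
        (∏ i ∈ Finset.range ((n - a₀) / h), ((t₀ : ℝ) / h + i)) /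
          Nat.factorial ((n - a₀) / h)
      else 0) :
    ∃ ψ : PowerSeries ℝ, psComp ψ I = R ∧
      ∃ φ : PowerSeries ℝ, PowerSeries.constantCoeff φ ≠ 0 ∧
        ψ = (PowerSeries.X : PowerSeries ℝ) ^ (a₀ / a) *
          psComp φ ((PowerSeries.X : PowerSeries ℝ) ^ (h / a)) := by
  classical
  obtain ⟨A, hA⟩ := hdvd₁
  obtain ⟨H, hH⟩ := hdvd₂
  have hA0 : 0 < A := Nat.pos_of_ne_zero (by rintro rfl; simp at hA; omega)
  have hH0 : 0 < H := Nat.pos_of_ne_zero (by rintro rfl; simp at hH; omega)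
  have hAdiv : a₀ / a = A := by rw [hA, Nat.mul_div_cancel_left _ ha]
  have hHdiv : h / a = H := by rw [hH, Nat.mul_div_cancel_left _ ha]
  have hIa : PowerSeries.coeff a I = c 0 := by
    rw [hI a, if_pos ⟨0, by ring⟩]; simp
  have hsupp : ∀ n, PowerSeries.coeff n I ≠ 0 → ∃ j, n = a + h * j := by
    intro n hn; by_contra hcon; rw [hI n, if_neg hcon] at hn; exact hn rfl
  set M : ℕ → ℕ → ℝ := fun t n => PowerSeries.coeff (a₀ + h * n) (I ^ (A + H * t)) with hM
  set g : ℕ → ℝ := fun m => PowerSeries.coeff (a₀ + h * m) R with hg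
  set φ : ℕ → ℝ := phiDef g M with hφ
  have hka : ∀ m : ℕ, (A + H * m) * a = a₀ + h * m := by
    intro m; rw [hA, hH]; ring
  have hMdiag : ∀ m, M m m = (c 0) ^ (A + H * m) := by
    intro m
    have h2 := (pow_aux a h hh I hsupp (A + H * m)).2
    rw [hka] at h2
    rw [hM]; simp only
    rw [h2, hIa]
  have hMne : ∀ m, M m m ≠ 0 := fun m => by
    rw [hMdiag m]; exact pow_ne_zero _ hc₀
  have hrec : ∀ m, ∑ t ∈ Finset.range (m + 1), φ t * M t m = g m := by
    intro m
    rw [Finset.sum_range_succ]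
    have hlast : φ m * M m m = g m - ∑ t ∈ Finset.range m, φ t * M t m := by
      rw [hφ, phiDef_eq, div_mul_cancel₀ _ (hMne m)]
    rw [hlast]; ring
  set ψ : PowerSeries ℝ := PowerSeries.mk
    (fun k => if ∃ m : ℕ, k = A + H * m then φ ((k - A) / H) else 0) with hψ
  have hψc : ∀ m : ℕ, PowerSeries.coeff (A + H * m) ψ = φ m := by
    intro m
    rw [hψ, PowerSeries.coeff_mk, if_pos ⟨m, rfl⟩]
    congr 1
    rw [Nat.add_sub_cancel_left, Nat.mul_div_cancel_left _ hH0]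
  have hψ0 : ∀ k : ℕ, (¬ ∃ m : ℕ, k = A + H * m) → PowerSeries.coeff k ψ = 0 := by
    intro k hk
    rw [hψ, PowerSeries.coeff_mk, if_neg hk]
  refine ⟨ψ, ?_, PowerSeries.mk φ, ?_, ?_⟩
  · -- psComp ψ I = R
    ext n
    simp only [psComp, PowerSeries.coeff_mk]
    by_cases hn : ∃ j : ℕ, n = a₀ + h * j
    · obtain ⟨j, rfl⟩ := hn
      set n := a₀ + h * j with hn
      have hsub : (Finset.range (j + 1)).image (fun m => A + H * m) ⊆ Finset.range (n + 1) := by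
        intro k hk
        simp only [Finset.mem_image, Finset.mem_range] at hk
        obtain ⟨m, hm, rfl⟩ := hk
        rw [Finset.mem_range, hn]
        have h1 : A ≤ a * A := Nat.le_mul_of_pos_left A ha
        have h2 : H * m ≤ h * j := by
          have h2a : H * m ≤ H * j := Nat.mul_le_mul_left H (by omega)
          have h2b : H * j ≤ a * (H * j) := Nat.le_mul_of_pos_left _ ha
          rw [hH, mul_assoc]; omega
        rw [hA]; omega
      have hzero : ∀ k ∈ Finset.range (n + 1),
          k ∉ (Finset.range (j + 1)).image (fun m => A + H * m) →
          PowerSeries.coeff k ψ * PowerSeries.coeff n (I ^ k) = 0 := by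
        intro k _ hknot
        by_cases hkm : ∃ m : ℕ, k = A + H * m
        · obtain ⟨m, rfl⟩ := hkm
          have hI0 : PowerSeries.coeff n (I ^ (A + H * m)) = 0 := by
            by_contra h2
            obtain ⟨j', hj'⟩ := (pow_aux a h hh I hsupp (A + H * m)).1 n h2
            rw [hka, hn] at hj'
            rw [add_assoc] at hj'
            have h3 : h * j = h * m + h * j' := Nat.add_left_cancel hj'
            have h4 : h * j = h * (m + j') := by rw [Nat.mul_add]; exact h3
            have h5 : j = m + j' := Nat.eq_of_mul_eq_mul_left hh h4
            exact hknot (Finset.mem_image.mpr ⟨m, Finset.mem_range.mpr (by omega), rfl⟩)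
          rw [hI0, mul_zero]
        · rw [hψ0 _ hkm, zero_mul]
      rw [← Finset.sum_subset hsub hzero]
      rw [Finset.sum_image (by
        intro x _ y _ hxy
        have : H * x = H * y := Nat.add_left_cancel hxy
        exact Nat.eq_of_mul_eq_mul_left hH0 this)]
      have hterm : ∀ m ∈ Finset.range (j + 1),
          PowerSeries.coeff (A + H * m) ψ * PowerSeries.coeff n (I ^ (A + H * m))
            = φ m * M m j := by
        intro m _
        rw [hψc m]
      rw [Finset.sum_congr rfl hterm, hrec j]
    · rw [hR n, if_neg hn]
      apply Finset.sum_eq_zero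
      intro k _
      by_cases hkm : ∃ m : ℕ, k = A + H * m
      · obtain ⟨m, rfl⟩ := hkm
        have hI0 : PowerSeries.coeff n (I ^ (A + H * m)) = 0 := by
          by_contra h2
          obtain ⟨j', hj'⟩ := (pow_aux a h hh I hsupp (A + H * m)).1 n h2
          rw [hka] at hj'
          exact hn ⟨m + j', by rw [hj', Nat.mul_add]; omega⟩
        rw [hI0, mul_zero]
      · rw [hψ0 _ hkm, zero_mul]
  · -- constant coefficient of mk φ
    rw [PowerSeries.constantCoeff_mk, hφ, phiDef_eq]
    simp only [Finset.range_zero, Finset.sum_empty, sub_zero]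
    have hg0 : g 0 = 1 := by
      rw [hg]; simp only
      rw [hR, if_pos ⟨0, by ring⟩]
      simp
    rw [hg0]
    exact div_ne_zero one_ne_zero (hMne 0)
  · -- structure identity
    rw [hAdiv, hHdiv]
    have hS : ∀ m : ℕ, PowerSeries.coeff m (psComp (PowerSeries.mk φ) (PowerSeries.X ^ H))
        = if H ∣ m then φ (m / H) else 0 := by
      intro m
      simp only [psComp, PowerSeries.coeff_mk, ← pow_mul]
      by_cases hd : H ∣ m
      · obtain ⟨q, rfl⟩ := hd
        rw [Finset.sum_eq_single q]
        · rw [PowerSeries.coeff_X_pow, if_pos rfl, mul_one, if_pos ⟨q, rfl⟩,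
            Nat.mul_div_cancel_left _ hH0]
        · intro k _ hk
          rw [PowerSeries.coeff_X_pow, if_neg (by
            intro hc
            exact hk (Nat.eq_of_mul_eq_mul_left hH0 hc.symm)), mul_zero]
        · intro hq
          exfalso
          exact hq (Finset.mem_range.mpr (Nat.lt_succ_of_le (Nat.le_mul_of_pos_left q hH0)))
      · rw [if_neg hd]
        apply Finset.sum_eq_zero
        intro k _
        rw [PowerSeries.coeff_X_pow, if_neg (fun hc => hd ⟨k, hc⟩), mul_zero]
    ext n
    rw [PowerSeries.coeff_X_pow_mul']
    by_cases hcond : ∃ m : ℕ, n = A + H * m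
    · obtain ⟨m, rfl⟩ := hcond
      rw [hψc m, if_pos (by omega), Nat.add_sub_cancel_left, hS,
        if_pos ⟨m, rfl⟩, Nat.mul_div_cancel_left _ hH0]
    · rw [hψ0 _ hcond]
      by_cases hle : A ≤ n
      · rw [if_pos hle, hS, if_neg (by
          intro ⟨q, hq⟩
          exact hcond ⟨q, by omega⟩)]
      · rw [if_neg hle]
end

section
/- Define δ(u) = (1−u⁶)^{1/6}, I(u) = ∫₀^u t δ(t)^{−5} dt and ψ implicitly by ψ(I(u)) = u²/δ(u)² for u ∈ (0,1) (this is the T₂,₃ model with a=2, b=3, s=1, h=6, a₀=t₀=2). Then as z → ρ⁻ with ρ = I(1), one has ψ(z) = (ρ−z)^{−2} − (1/7)(ρ−z)⁴ + O((ρ−z)^{10}). -/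
/-!
The map `δ(t) = (1 - t⁶)^{1/6}` is a decreasing involution of `[0, 1]`, and the substitution
`σ = δ(t)` turns `t δ(t)⁻⁵ dt` into `-δ(σ)⁻⁴ dσ`. Hence for `u ∈ (0, 1)` and `τ = δ(u)`,
`ρ - I(u) = X(τ) := ∫₀^τ δ(σ)⁻⁴ dσ` and `ψ(ρ - X(τ)) = δ(τ)² / τ²`: the singularity of `I` at
`1` becomes the regular point `0` of `X`. From `δ(σ)⁻⁴ = (1 - σ⁶)^{-2/3} = 1 + 2σ⁶/3 + O(σ¹²)`
and `δ(τ)² = (1 - τ⁶)^{1/3} = 1 - τ⁶/3 + O(τ¹²)` we get `X = τ + 2τ⁷/21 + O(τ¹³)` and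
`ψ = τ⁻² - τ⁴/3 + O(τ¹⁰)`, and eliminating `τ` gives `ψ = X⁻² - X⁴/7 + O(X¹⁰)`. Every `O` is
made effective by explicit two-sided bounds valid for `τ ≤ 1/2`.
-/

open MeasureTheory Set Filter Topology Asymptotics

namespace UrnT23

lemma cube_root_bounds {v w : ℝ} (hv0 : 0 ≤ v) (hv1 : v ≤ 1 / 64) (hw : 0 ≤ w)
    (hw3 : w ^ 3 = 1 - v) : 1 - v / 3 - v ^ 2 / 6 ≤ w ∧ w ≤ 1 - v / 3 := by
  constructor
  · refine le_of_pow_le_pow_left₀ three_ne_zero hw ?_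
    rw [hw3]
    nlinarith [sq_nonneg v, sq_nonneg (v * v)]
  · refine le_of_pow_le_pow_left₀ three_ne_zero (by linarith) ?_
    rw [hw3]
    nlinarith [sq_nonneg v]

lemma inv_sq_cube_root_bounds {v w : ℝ} (hv0 : 0 ≤ v) (hv1 : v ≤ 1 / 64) (hw : 0 ≤ w)
    (hw3 : w ^ 3 = 1 - v) : 1 + 2 / 3 * v ≤ (w ^ 2)⁻¹ ∧ (w ^ 2)⁻¹ ≤ 1 + 2 / 3 * v + v ^ 2 := by
  obtain ⟨hlo, hhi⟩ := cube_root_bounds hv0 hv1 hw hw3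
  have hlo0 : 0 ≤ 1 - v / 3 - v ^ 2 / 6 := by nlinarith
  have hw2 : 0 < w ^ 2 := pow_pos (by nlinarith) 2
  constructor
  · rw [le_inv_comm₀ (by positivity) hw2, ← one_div, le_div_iff₀ (by positivity)]
    nlinarith [pow_le_pow_left₀ hw hhi 2, sq_nonneg v]
  · rw [inv_le_comm₀ hw2 (by positivity), ← one_div, div_le_iff₀ (by positivity)]
    nlinarith [pow_le_pow_left₀ hlo0 hlo 2, sq_nonneg v, mul_nonneg (mul_nonneg hv0 hv0) hv0]

section Algebra

variable {τ x : ℝ}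

lemma pow_six_le_of_le_half (h0 : 0 ≤ τ) (h1 : τ ≤ 1 / 2) : τ ^ 6 ≤ 1 / 64 := by
  calc τ ^ 6 ≤ (1 / 2) ^ 6 := by gcongr
    _ = 1 / 64 := by norm_num

lemma one_div_sq_bounds (h0 : 0 < τ) (h1 : τ ≤ 1 / 2) (hx1 : τ + 2 / 21 * τ ^ 7 ≤ x)
    (hx2 : x ≤ τ + 2 / 21 * τ ^ 7 + τ ^ 13 / 13) :
    1 / τ ^ 2 - 4 / 21 * τ ^ 4 - 2 / 13 * τ ^ 10 ≤ 1 / x ^ 2 ∧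
      1 / x ^ 2 ≤ 1 / τ ^ 2 - 4 / 21 * τ ^ 4 + τ ^ 10 / 25 := by
  have h6 := pow_six_le_of_le_half h0.le h1
  have he0 : 2 / 21 * τ ^ 7 ≤ x - τ := by linarith
  have he1 : x - τ ≤ τ ^ 7 / 10 := by nlinarith [pow_pos h0 7, pow_pos h0 13]
  have hτx : τ ≤ x := by linarith [pow_pos h0 7]
  have hx0 : 0 < x := h0.trans_le hτx
  constructor
  · -- `(3τ - 2x) / τ³` is the tangent line of the convex function `1 / x²` at `τ`
    calc 1 / τ ^ 2 - 4 / 21 * τ ^ 4 - 2 / 13 * τ ^ 10 ≤ (3 * τ - 2 * x) / τ ^ 3 := by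
          rw [le_div_iff₀ (by positivity)]
          field_simp
          linarith
      _ ≤ 1 / x ^ 2 := by
          rw [div_le_div_iff₀ (by positivity) (by positivity)]
          nlinarith [sq_nonneg (x - τ)]
  · calc 1 / x ^ 2 ≤ (τ ^ 2 - 2 * (x - τ) * τ + 4 * (x - τ) ^ 2) / τ ^ 4 := by
          rw [div_le_div_iff₀ (by positivity) (by positivity)]
          nlinarith [sq_nonneg (x - τ), mul_nonneg (mul_nonneg (sub_nonneg.2 hτx)
            (sub_nonneg.2 hτx)) (sub_nonneg.2 hτx)]
      _ ≤ 1 / τ ^ 2 - 4 / 21 * τ ^ 4 + τ ^ 10 / 25 := by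
          rw [div_le_iff₀ (by positivity)]
          field_simp
          nlinarith [mul_le_mul he1 he1 (by linarith [pow_pos h0 7]) (by positivity),
            mul_le_mul_of_nonneg_right he0 h0.le]

lemma pow_four_bounds (h0 : 0 < τ) (h1 : τ ≤ 1 / 2) (hx1 : τ + 2 / 21 * τ ^ 7 ≤ x)
    (hx2 : x ≤ τ + 2 / 21 * τ ^ 7 + τ ^ 13 / 13) : τ ^ 4 ≤ x ^ 4 ∧ x ^ 4 ≤ τ ^ 4 + τ ^ 10 := by
  have h6 := pow_six_le_of_le_half h0.le h1
  have hτx : τ ≤ x := by linarith [pow_pos h0 7]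
  have hx : x ≤ τ * (1 + τ ^ 6 / 10) := by nlinarith [pow_pos h0 7, pow_pos h0 13]
  refine ⟨pow_le_pow_left₀ h0.le hτx 4, ?_⟩
  calc x ^ 4 ≤ (τ * (1 + τ ^ 6 / 10)) ^ 4 := pow_le_pow_left₀ (h0.le.trans hτx) hx 4
    _ = τ ^ 4 * (1 + τ ^ 6 / 10) ^ 4 := by ring
    _ ≤ τ ^ 4 * (1 + τ ^ 6) := by
        gcongr
        nlinarith [pow_nonneg h0.le 6, sq_nonneg (τ ^ 6), sq_nonneg (τ ^ 6 * τ ^ 6)]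
    _ = τ ^ 4 + τ ^ 10 := by ring

lemma abs_expansion_error_le {y : ℝ} (h0 : 0 < τ) (h1 : τ ≤ 1 / 2)
    (hx1 : τ + 2 / 21 * τ ^ 7 ≤ x) (hx2 : x ≤ τ + 2 / 21 * τ ^ 7 + τ ^ 13 / 13)
    (hy1 : 1 / τ ^ 2 - τ ^ 4 / 3 - τ ^ 10 / 6 ≤ y) (hy2 : y ≤ 1 / τ ^ 2 - τ ^ 4 / 3) :
    |y - 1 / x ^ 2 + 1 / 7 * x ^ 4| ≤ 10 * x ^ 10 := by
  obtain ⟨hinv1, hinv2⟩ := one_div_sq_bounds h0 h1 hx1 hx2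
  obtain ⟨hpow1, hpow2⟩ := pow_four_bounds h0 h1 hx1 hx2
  have hx10 : τ ^ 10 ≤ x ^ 10 := pow_le_pow_left₀ h0.le (by linarith [pow_pos h0 7]) 10
  rw [abs_le]
  constructor <;> linarith

end Algebra

noncomputable def δ (u : ℝ) : ℝ := (1 - u ^ 6) ^ ((1 : ℝ) / 6)

noncomputable def weight (t : ℝ) : ℝ := t * (1 - t ^ 6) ^ (-(5 / 6 : ℝ))

noncomputable def kernel (σ : ℝ) : ℝ := (δ σ ^ 4)⁻¹

noncomputable def tail (τ : ℝ) : ℝ := ∫ σ in (0 : ℝ)..τ, kernel σ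

lemma delta_pow_six {t : ℝ} (ht : t ^ 6 ≤ 1) : δ t ^ 6 = 1 - t ^ 6 := by
  rw [δ, show (1 : ℝ) / 6 = ((6 : ℕ) : ℝ)⁻¹ by norm_num,
    Real.rpow_inv_natCast_pow (by linarith) (by norm_num)]

lemma delta_pos {t : ℝ} (ht : t ^ 6 < 1) : 0 < δ t :=
  Real.rpow_pos_of_pos (by linarith) _

lemma delta_delta {t : ℝ} (h0 : 0 ≤ t) (h1 : t ≤ 1) : δ (δ t) = t := by
  have ht : t ^ 6 ≤ 1 := pow_le_one₀ h0 h1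
  rw [δ, delta_pow_six ht, sub_sub_cancel, show (1 : ℝ) / 6 = ((6 : ℕ) : ℝ)⁻¹ by norm_num,
    Real.pow_rpow_inv_natCast h0 (by norm_num)]

lemma delta_zero : δ 0 = 1 := by simp [δ]

lemma delta_one : δ 1 = 0 := by simp [δ]

lemma strictAntiOn_delta : StrictAntiOn δ (Icc 0 1) := by
  intro a ha b hb hab
  have hb6 : b ^ 6 ≤ 1 := pow_le_one₀ hb.1 hb.2
  exact Real.rpow_lt_rpow (by linarith) (by gcongr; exact ha.1) (by norm_num)

lemma delta_lt_one {t : ℝ} (h0 : 0 < t) (h1 : t ≤ 1) : δ t < 1 := by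
  rw [← delta_zero]
  exact strictAntiOn_delta ⟨le_rfl, zero_le_one⟩ ⟨h0.le, h1⟩ h0

lemma delta_mem_Icc {t : ℝ} (ht : t ∈ Icc (0 : ℝ) 1) : δ t ∈ Icc (0 : ℝ) 1 := by
  have h1 : 0 ≤ 1 - t ^ 6 := sub_nonneg.2 (pow_le_one₀ ht.1 ht.2)
  exact ⟨Real.rpow_nonneg h1 _,
    Real.rpow_le_one h1 (by linarith [pow_nonneg ht.1 6]) (by norm_num)⟩

lemma image_delta_Ioo {u : ℝ} (hu : u ∈ Icc (0 : ℝ) 1) : δ '' Ioo u 1 = Ioo 0 (δ u) := by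
  have hanti := strictAntiOn_delta
  ext σ
  constructor
  · rintro ⟨t, ht, rfl⟩
    have ht' : t ∈ Icc (0 : ℝ) 1 := ⟨hu.1.trans ht.1.le, ht.2.le⟩
    exact ⟨delta_one ▸ hanti ht' ⟨zero_le_one, le_rfl⟩ ht.2,
      hanti hu ht' ht.1⟩
  · intro hσ
    have hσ' : σ ∈ Icc (0 : ℝ) 1 := ⟨hσ.1.le, hσ.2.le.trans (delta_mem_Icc hu).2⟩
    refine ⟨δ σ, ⟨?_, ?_⟩, delta_delta hσ'.1 hσ'.2⟩
    · rw [← delta_delta hu.1 hu.2]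
      exact hanti hσ' (delta_mem_Icc hu) hσ.2
    · rw [← delta_zero]
      exact hanti ⟨le_rfl, zero_le_one⟩ hσ' hσ.1

lemma hasDerivAt_delta {t : ℝ} (ht : t ^ 6 < 1) :
    HasDerivAt δ (-(t ^ 5 * (1 - t ^ 6) ^ (-(5 / 6 : ℝ)))) t := by
  have hinner : HasDerivAt (fun t : ℝ => 1 - t ^ 6) (-(6 * t ^ 5)) t := by
    simpa using (hasDerivAt_pow 6 t).const_sub 1
  refine (hinner.rpow_const (p := 1 / 6) (Or.inl (by linarith))).congr_deriv ?_
  rw [show (1 : ℝ) / 6 - 1 = -(5 / 6) by norm_num]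
  ring

lemma abs_deriv_delta_mul_kernel {t : ℝ} (h0 : 0 < t) (h1 : t < 1) :
    |-(t ^ 5 * (1 - t ^ 6) ^ (-(5 / 6 : ℝ)))| * kernel (δ t) = weight t := by
  have ht6 : t ^ 6 < 1 := pow_lt_one₀ h0.le h1 (by norm_num)
  rw [kernel, delta_delta h0.le h1.le, abs_neg,
    abs_of_nonneg (by have := Real.rpow_nonneg (sub_nonneg.2 ht6.le) (-(5 / 6 : ℝ)); positivity),
    weight]
  field_simp

lemma continuousOn_kernel : ContinuousOn kernel (Ico 0 1) := by
  intro σ hσ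
  have hσ6 : σ ^ 6 < 1 := pow_lt_one₀ hσ.1 hσ.2 (by norm_num)
  have hδ : ContinuousAt δ σ :=
    (continuousAt_const.sub (continuousAt_id.pow 6)).rpow_const (Or.inr (by norm_num))
  exact ((hδ.pow 4).inv₀ (pow_pos (delta_pos hσ6) 4).ne').continuousWithinAt

lemma integrableOn_kernel {a : ℝ} (ha : a < 1) : IntegrableOn kernel (Icc 0 a) :=
  (continuousOn_kernel.mono (Icc_subset_Ico_right ha)).integrableOn_Icc

lemma continuousOn_weight : ContinuousOn weight (Ico 0 1) := by
  intro t ht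
  have ht6 : t ^ 6 < 1 := pow_lt_one₀ ht.1 ht.2 (by norm_num)
  have hbase : ContinuousAt (fun t : ℝ => 1 - t ^ 6) t := by fun_prop
  exact (continuousAt_id.mul (hbase.rpow_const (Or.inl (sub_pos.2 ht6).ne'))).continuousWithinAt

lemma integrableOn_weight_Ioo_and_setIntegral_eq_tail {u : ℝ} (hu : u ∈ Ioo (0 : ℝ) 1) :
    IntegrableOn weight (Ioo u 1) ∧ ∫ t in Ioo u 1, weight t = tail (δ u) := by
  have hderiv : ∀ t ∈ Ioo u 1, HasDerivWithinAt δ (-(t ^ 5 * (1 - t ^ 6) ^ (-(5 / 6 : ℝ))))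
      (Ioo u 1) t := fun t ht =>
    (hasDerivAt_delta (pow_lt_one₀ (hu.1.le.trans ht.1.le) ht.2 (by norm_num))).hasDerivWithinAt
  have hinj : InjOn δ (Ioo u 1) :=
    strictAntiOn_delta.injOn.mono (Ioo_subset_Icc_self.trans (Icc_subset_Icc hu.1.le le_rfl))
  have hcongr : EqOn (fun t => |-(t ^ 5 * (1 - t ^ 6) ^ (-(5 / 6 : ℝ)))| • kernel (δ t)) weight
      (Ioo u 1) := fun t ht => abs_deriv_delta_mul_kernel (hu.1.trans ht.1) ht.2
  have himage := image_delta_Ioo (u := u) ⟨hu.1.le, hu.2.le⟩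
  constructor
  · rw [← integrableOn_congr_fun hcongr measurableSet_Ioo,
      ← integrableOn_image_iff_integrableOn_abs_deriv_smul measurableSet_Ioo hderiv hinj, himage]
    exact (integrableOn_kernel (delta_lt_one hu.1 hu.2.le)).mono_set Ioo_subset_Icc_self
  · rw [← setIntegral_congr_fun measurableSet_Ioo hcongr,
      ← integral_image_eq_integral_abs_deriv_smul measurableSet_Ioo hderiv hinj, himage, tail,
      intervalIntegral.integral_of_le (delta_pos (pow_lt_one₀ hu.1.le hu.2 (by norm_num))).le,
      integral_Ioc_eq_integral_Ioo]

lemma integral_weight_sub_eq_tail {u : ℝ} (hu : u ∈ Ioo (0 : ℝ) 1) :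
    (∫ t in (0 : ℝ)..1, weight t) - (∫ t in (0 : ℝ)..u, weight t) = tail (δ u) := by
  obtain ⟨hint, heq⟩ := integrableOn_weight_Ioo_and_setIntegral_eq_tail hu
  have hright : IntervalIntegrable weight volume u 1 := by
    rw [intervalIntegrable_iff_integrableOn_Ioo_of_le hu.2.le]
    exact hint
  have hleft : IntervalIntegrable weight volume 0 u := by
    refine ContinuousOn.intervalIntegrable (continuousOn_weight.mono ?_)
    rw [uIcc_of_le hu.1.le]
    exact Icc_subset_Ico_right hu.2
  rw [intervalIntegral.integral_interval_sub_left (hleft.trans hright) hleft,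
    intervalIntegral.integral_of_le hu.2.le, integral_Ioc_eq_integral_Ioo, heq]

lemma kernel_bounds {σ : ℝ} (h0 : 0 ≤ σ) (h1 : σ ≤ 1 / 2) :
    1 + 2 / 3 * σ ^ 6 ≤ kernel σ ∧ kernel σ ≤ 1 + 2 / 3 * σ ^ 6 + σ ^ 12 := by
  have h6 := pow_six_le_of_le_half h0 h1
  have hw3 : (δ σ ^ 2) ^ 3 = 1 - σ ^ 6 := by rw [← pow_mul, delta_pow_six (by linarith)]
  rw [kernel, show σ ^ 12 = (σ ^ 6) ^ 2 by ring, show δ σ ^ 4 = (δ σ ^ 2) ^ 2 by ring]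
  exact inv_sq_cube_root_bounds (by positivity) h6 (sq_nonneg _) hw3

lemma tail_zero : tail 0 = 0 := intervalIntegral.integral_same

lemma tail_bounds {τ : ℝ} (h0 : 0 ≤ τ) (h1 : τ ≤ 1 / 2) :
    τ + 2 / 21 * τ ^ 7 ≤ tail τ ∧ tail τ ≤ τ + 2 / 21 * τ ^ 7 + τ ^ 13 / 13 := by
  have hint : IntervalIntegrable kernel volume 0 τ := by
    refine IntegrableOn.intervalIntegrable ?_
    rw [uIcc_of_le h0]
    exact integrableOn_kernel (by linarith)
  constructor
  · calc τ + 2 / 21 * τ ^ 7 = ∫ σ in (0 : ℝ)..τ, (1 + 2 / 3 * σ ^ 6) := by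
          simp [integral_pow]
          ring
      _ ≤ tail τ := intervalIntegral.integral_mono_on h0
          (Continuous.intervalIntegrable (by fun_prop) _ _) hint
          fun σ hσ => (kernel_bounds hσ.1 (hσ.2.trans h1)).1
  · calc tail τ ≤ ∫ σ in (0 : ℝ)..τ, (1 + 2 / 3 * σ ^ 6 + σ ^ 12) :=
          intervalIntegral.integral_mono_on h0 hint
            (Continuous.intervalIntegrable (by fun_prop) _ _)
            fun σ hσ => (kernel_bounds hσ.1 (hσ.2.trans h1)).2
      _ = τ + 2 / 21 * τ ^ 7 + τ ^ 13 / 13 := by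
          rw [intervalIntegral.integral_add (by simp) (by simp)]
          simp [integral_pow]
          ring

lemma sq_delta_div_sq_bounds {τ : ℝ} (h0 : 0 < τ) (h1 : τ ≤ 1 / 2) :
    1 / τ ^ 2 - τ ^ 4 / 3 - τ ^ 10 / 6 ≤ δ τ ^ 2 / τ ^ 2 ∧
      δ τ ^ 2 / τ ^ 2 ≤ 1 / τ ^ 2 - τ ^ 4 / 3 := by
  have h6 := pow_six_le_of_le_half h0.le h1
  have hw3 : (δ τ ^ 2) ^ 3 = 1 - τ ^ 6 := by rw [← pow_mul, delta_pow_six (by linarith)]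
  obtain ⟨hlo, hhi⟩ := cube_root_bounds (by positivity) h6 (sq_nonneg _) hw3
  constructor
  · calc 1 / τ ^ 2 - τ ^ 4 / 3 - τ ^ 10 / 6 = (1 - τ ^ 6 / 3 - (τ ^ 6) ^ 2 / 6) / τ ^ 2 := by
          field_simp
      _ ≤ δ τ ^ 2 / τ ^ 2 := by gcongr
  · calc δ τ ^ 2 / τ ^ 2 ≤ (1 - τ ^ 6 / 3) / τ ^ 2 := by gcongr
      _ = 1 / τ ^ 2 - τ ^ 4 / 3 := by
          field_simp

lemma abs_expansion_error_le_tail {τ : ℝ} (h0 : 0 < τ) (h1 : τ ≤ 1 / 2) :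
    |δ τ ^ 2 / τ ^ 2 - 1 / tail τ ^ 2 + 1 / 7 * tail τ ^ 4| ≤ 10 * tail τ ^ 10 :=
  abs_expansion_error_le h0 h1 (tail_bounds h0.le h1).1 (tail_bounds h0.le h1).2
    (sq_delta_div_sq_bounds h0 h1).1 (sq_delta_div_sq_bounds h0 h1).2

lemma exists_tail_eq {s : ℝ} (hs : s ∈ Ioo 0 (tail (1 / 2))) :
    ∃ τ ∈ Ioo (0 : ℝ) (1 / 2), tail τ = s := by
  have hint : IntegrableOn kernel (uIcc 0 (1 / 2)) := by
    rw [uIcc_of_le (by norm_num)]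
    exact integrableOn_kernel (by norm_num)
  have hcont : ContinuousOn tail (Icc 0 (1 / 2)) := by
    have h := intervalIntegral.continuousOn_primitive_interval hint
    rwa [uIcc_of_le (by norm_num)] at h
  exact intermediate_value_Ioo (by norm_num) hcont (show s ∈ Ioo (tail 0) _ by rwa [tail_zero])

lemma apply_integral_sub_tail {ψ : ℝ → ℝ}
    (hψ : ∀ u ∈ Ioo (0 : ℝ) 1, ψ (∫ t in (0 : ℝ)..u, weight t) = u ^ 2 / δ u ^ 2)
    {τ : ℝ} (hτ : τ ∈ Ioo (0 : ℝ) 1) :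
    ψ ((∫ t in (0 : ℝ)..1, weight t) - tail τ) = δ τ ^ 2 / τ ^ 2 := by
  have hu : δ τ ∈ Ioo (0 : ℝ) 1 :=
    ⟨delta_pos (pow_lt_one₀ hτ.1.le hτ.2 (by norm_num)), delta_lt_one hτ.1 hτ.2.le⟩
  have htail := integral_weight_sub_eq_tail hu
  rw [delta_delta hτ.1.le hτ.2.le] at htail
  rw [← htail, sub_sub_cancel, hψ _ hu, delta_delta hτ.1.le hτ.2.le]

end UrnT23

/-- For the `T₂,₃` model (`δ(u) = (1-u⁶)^{1/6}`, `I(u) = ∫₀ᵘ t δ(t)⁻⁵ dt`,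
`ψ(I(u)) = u²/δ(u)²`), as `z → ρ⁻` where `ρ = I(1)`:
`ψ(z) = (ρ-z)⁻² - (1/7)(ρ-z)⁴ + O((ρ-z)¹⁰)`. -/
theorem urn_T23_singular_expansion (ψ : ℝ → ℝ)
    (hψ : ∀ u ∈ Set.Ioo (0 : ℝ) 1,
      ψ (∫ t in (0 : ℝ)..u, t * (1 - t ^ 6) ^ (-(5 / 6 : ℝ))) =
        u ^ 2 / ((1 - u ^ 6) ^ ((1 : ℝ) / 6)) ^ 2) :
    (fun z : ℝ =>
        ψ z - 1 / ((∫ t in (0 : ℝ)..1, t * (1 - t ^ 6) ^ (-(5 / 6 : ℝ))) - z) ^ 2 +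
          (1 / 7) * ((∫ t in (0 : ℝ)..1, t * (1 - t ^ 6) ^ (-(5 / 6 : ℝ))) - z) ^ 4)
      =O[𝓝[<] (∫ t in (0 : ℝ)..1, t * (1 - t ^ 6) ^ (-(5 / 6 : ℝ)))]
        (fun z : ℝ =>
          ((∫ t in (0 : ℝ)..1, t * (1 - t ^ 6) ^ (-(5 / 6 : ℝ))) - z) ^ 10) := by
  have hweight : (fun t : ℝ => t * (1 - t ^ 6) ^ (-(5 / 6 : ℝ))) = UrnT23.weight := rfl
  rw [hweight] at hψ ⊢
  set ρ := ∫ t in (0 : ℝ)..1, UrnT23.weight t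
  have hpos : 0 < UrnT23.tail (1 / 2) := by linarith [(UrnT23.tail_bounds (by norm_num) le_rfl).1]
  refine isBigO_iff.2 ⟨10, ?_⟩
  filter_upwards [Ioo_mem_nhdsLT (sub_lt_self ρ hpos)] with z hz
  obtain ⟨τ, hτ, hτz⟩ := UrnT23.exists_tail_eq (s := ρ - z) ⟨by linarith [hz.2], by linarith [hz.1]⟩
  obtain rfl : z = ρ - UrnT23.tail τ := by linarith
  have htail : 0 ≤ UrnT23.tail τ := by linarith [hz.2]
  rw [sub_sub_cancel, UrnT23.apply_integral_sub_tail hψ ⟨hτ.1, hτ.2.trans (by norm_num)⟩,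
    Real.norm_of_nonneg (pow_nonneg htail 10), Real.norm_eq_abs]
  exact UrnT23.abs_expansion_error_le_tail hτ.1 hτ.2.le
end

section
/- Fix s ≥ 1. The arithmetically irreducible subtractive balanced 2×2 urn matrices (−a, a+s; b+s, −b) with a, b ≥ 1, gcd(a, a+s, b+s, b) = 1, satisfying the tenability divisibilities a ∣ b+s and b ∣ a+s, and the integrality condition s ∣ a+b+s, are exactly: for s = 1, (a,b) ∈ {(2,3),(1,2),(1,1)} up to swapping roles; for s = 2, (a,b) ∈ {(1,1),(1,3)} up to swap; for s = 3, (a,b) = (1,2) up to swap; and there are none for s ≥ 4. -/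
theorem urn_bound_aux (x y z : ℕ) (hx : 1 ≤ x) (hy : 1 ≤ y) (hz : 1 ≤ z)
    (h : x * y * z ≤ x + y + z) (h1 : x ≤ y + z) : x ≤ 4 := by
  obtain ⟨y', rfl⟩ : ∃ y', y = y' + 1 := ⟨y - 1, by omega⟩
  obtain ⟨z', rfl⟩ : ∃ z', z = z' + 1 := ⟨z - 1, by omega⟩
  by_contra hc
  push_neg at hc
  have h5 : 5 * y' ≤ x * y' := mul_le_mul_left (by omega) y'
  have h6 : 5 * z' ≤ x * z' := mul_le_mul_left (by omega) z'
  have h7 : y' + z' = 0 := by nlinarith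
  omega

/-- Classification of the elliptic urns: the arithmetically irreducible subtractive
balanced urns `(-a, a+s; b+s, -b)` with `a, b ≥ 1` satisfying the tenability
divisibilities `a ∣ b+s`, `b ∣ a+s` and the integrality condition `s ∣ a+b+s` are
exactly: for `s = 1`, `(a,b) ∈ {(2,3),(1,2),(1,1)}` up to swap; for `s = 2`,
`(a,b) ∈ {(1,1),(1,3)}` up to swap; for `s = 3`, `(a,b) = (1,2)` up to swap; and
none exist for `s ≥ 4`. -/
theorem urn_elliptic_classification (s a b : ℕ) (hs : 1 ≤ s) (ha : 1 ≤ a) (hb : 1 ≤ b) :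
    (Nat.gcd a (Nat.gcd (a + s) (Nat.gcd (b + s) b)) = 1 ∧
        a ∣ b + s ∧ b ∣ a + s ∧ s ∣ a + b + s) ↔
      ((s = 1 ∧ ((a, b) = (2, 3) ∨ (a, b) = (3, 2) ∨ (a, b) = (1, 2) ∨
          (a, b) = (2, 1) ∨ (a, b) = (1, 1))) ∨
        (s = 2 ∧ ((a, b) = (1, 1) ∨ (a, b) = (1, 3) ∨ (a, b) = (3, 1))) ∨
        (s = 3 ∧ ((a, b) = (1, 2) ∨ (a, b) = (2, 1)))) := by
  constructor
  · rintro ⟨hg, hab, hba, hsab⟩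
    -- s ∣ a + b
    have hsab' : s ∣ a + b := (Nat.dvd_add_right (dvd_refl s)).mp (by
      have : a + b + s = s + (a + b) := by ring
      rwa [this] at hsab)
    -- pairwise coprime
    have dvd_gcd_one : ∀ d : ℕ, d ∣ a → d ∣ b → d ∣ s → d = 1 := by
      intro d hda hdb hds
      have : d ∣ Nat.gcd a (Nat.gcd (a + s) (Nat.gcd (b + s) b)) :=
        Nat.dvd_gcd hda (Nat.dvd_gcd (Dvd.dvd.add hda hds)
          (Nat.dvd_gcd (Dvd.dvd.add hdb hds) hdb))
      rw [hg] at this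
      exact Nat.dvd_one.mp this
    have cab : Nat.Coprime a b := by
      have h1 : Nat.gcd a b ∣ s := by
        have : Nat.gcd a b ∣ b + s := dvd_trans (Nat.gcd_dvd_left a b) hab
        simpa using Nat.dvd_sub this (Nat.gcd_dvd_right a b)
      exact dvd_gcd_one _ (Nat.gcd_dvd_left a b) (Nat.gcd_dvd_right a b) h1
    have cas : Nat.Coprime a s := by
      have h1 : Nat.gcd a s ∣ b := by
        have : Nat.gcd a s ∣ b + s := dvd_trans (Nat.gcd_dvd_left a s) hab
        simpa using Nat.dvd_sub this (Nat.gcd_dvd_right a s)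
      exact dvd_gcd_one _ (Nat.gcd_dvd_left a s) h1 (Nat.gcd_dvd_right a s)
    have cbs : Nat.Coprime b s := by
      have h1 : Nat.gcd b s ∣ a := by
        have : Nat.gcd b s ∣ a + s := dvd_trans (Nat.gcd_dvd_left b s) hba
        simpa using Nat.dvd_sub this (Nat.gcd_dvd_right b s)
      exact dvd_gcd_one _ h1 (Nat.gcd_dvd_left b s) (Nat.gcd_dvd_right b s)
    have hda : a ∣ a + b + s := by
      have : a + b + s = a + (b + s) := by ring
      rw [this]; exact Dvd.dvd.add (dvd_refl a) hab
    have hdb : b ∣ a + b + s := by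
      have : a + b + s = b + (a + s) := by ring
      rw [this]; exact Dvd.dvd.add (dvd_refl b) hba
    have habd : a * b ∣ a + b + s := Nat.Coprime.mul_dvd_of_dvd_of_dvd cab hda hdb
    have hall : a * b * s ∣ a + b + s :=
      Nat.Coprime.mul_dvd_of_dvd_of_dvd (Nat.Coprime.mul cas cbs) habd hsab
    have hle : a * b * s ≤ a + b + s :=
      Nat.le_of_dvd (by omega) hall
    have h1 : a ≤ b + s := Nat.le_of_dvd (by omega) hab
    have h2 : b ≤ a + s := Nat.le_of_dvd (by omega) hba
    have h3 : s ≤ a + b := Nat.le_of_dvd (by omega) hsab'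
    have ba : a ≤ 4 := urn_bound_aux a b s ha hb hs hle h1
    have bb : b ≤ 4 := urn_bound_aux b a s hb ha hs
      (by rw [show b * a * s = a * b * s by ring]; linarith) h2
    have bs : s ≤ 4 := urn_bound_aux s a b hs ha hb
      (by rw [show s * a * b = a * b * s by ring]; linarith) h3
    clear dvd_gcd_one cab cas cbs hda hdb habd hall hle h1 h2 h3 hsab'
    interval_cases a <;> interval_cases b <;> interval_cases s <;>
      revert hg hab hba hsab <;> decide
  · rintro (⟨rfl, h | h | h | h | h⟩ | ⟨rfl, h | h | h⟩ | ⟨rfl, h | h⟩) <;>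
      · injection h with h1 h2
        subst h1; subst h2
        exact ⟨by decide, by decide, by decide, by decide⟩
end
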